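/- If the deformation gradient F(X) is invertible at every point, then for every X ∈ ℝ³ and all indices α, β, γ, η ∈ {1,2,3}, Σ_{i=1}^{3} (∂χ^i/∂X^γ) · (∂³χ^i/∂X^α∂X^β∂X^η) = − (1/4) Σ_{ν,δ=1}^{3} (C⁻¹)^{νδ} · ( ∂C_{γν}/∂X^η + ∂C_{ην}/∂X^γ − ∂C_{ηγ}/∂X^ν ) · ( ∂C_{αδ}/∂X^β + ∂C_{βδ}/∂X^α − ∂C_{βα}/∂X^δ ) + (1/2) · ( ∂²C_{αγ}/∂X^η∂X^β + ∂²C_{βγ}/∂X^η∂X^α − ∂²C_{βα}/∂X^η∂X^γ ), all quantities being evaluated at X; here C⁻¹ is the inverse matrix of C(X), which exists since F(X) is invertible. -/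

import Mathlib

/-- Partial derivative of a scalar field on ℝ³ in the coordinate direction `α`. -/
noncomputable def pd (f : (Fin 3 → ℝ) → ℝ) (α : Fin 3) : (Fin 3 → ℝ) → ℝ :=
  fun X => fderiv ℝ f X (Pi.single α 1)

/-- Right Cauchy–Green tensor component C_{αβ} of the placement χ, as a function of X. -/
noncomputable def CG (χ : (Fin 3 → ℝ) → (Fin 3 → ℝ)) (α β : Fin 3) : (Fin 3 → ℝ) → ℝ :=
  fun X => ∑ i, pd (fun Y => χ Y i) α X * pd (fun Y => χ Y i) β X

/-- The deformation gradient F(X), with entries F^i_α = ∂χ^i/∂X^α, as a matrix. -/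
noncomputable def Fgrad (χ : (Fin 3 → ℝ) → (Fin 3 → ℝ)) (X : Fin 3 → ℝ) :
    Matrix (Fin 3) (Fin 3) ℝ :=
  Matrix.of fun i α => pd (fun Y => χ Y i) α X

/-- The right Cauchy–Green tensor as a matrix. -/
noncomputable def CGmat (χ : (Fin 3 → ℝ) → (Fin 3 → ℝ)) (X : Fin 3 → ℝ) :
    Matrix (Fin 3) (Fin 3) ℝ :=
  Matrix.of fun α β => CG χ α β X

section Aux

open Matrix

lemma pd_smooth {f : (Fin 3 → ℝ) → ℝ} (hf : ContDiff ℝ (⊤ : ℕ∞) f) (α : Fin 3) :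
    ContDiff ℝ (⊤ : ℕ∞) (pd f α) :=
  (ContinuousLinearMap.apply ℝ ℝ (Pi.single α 1 : Fin 3 → ℝ)).contDiff.comp
    (hf.fderiv_right (by simp))

lemma chi_smooth {χ : (Fin 3 → ℝ) → (Fin 3 → ℝ)} (hχ : ContDiff ℝ (⊤ : ℕ∞) χ) (i : Fin 3) :
    ContDiff ℝ (⊤ : ℕ∞) (fun Y => χ Y i) :=
  contDiff_pi.mp hχ i

lemma pd_eq_snd {f : (Fin 3 → ℝ) → ℝ} (hf : ContDiff ℝ (⊤ : ℕ∞) f) (α β : Fin 3) (X : Fin 3 → ℝ) :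
    pd (pd f α) β X = fderiv ℝ (fderiv ℝ f) X (Pi.single β 1) (Pi.single α 1) := by
  have h1 : ContDiff ℝ (⊤ : ℕ∞) (fderiv ℝ f) := hf.fderiv_right (by simp)
  have h2 : pd f α = (ContinuousLinearMap.apply ℝ ℝ (Pi.single α 1 : Fin 3 → ℝ)) ∘
      (fderiv ℝ f) := rfl
  rw [pd, h2, fderiv_comp _ (ContinuousLinearMap.differentiableAt _)
    ((h1.differentiable (by simp)) X), ContinuousLinearMap.fderiv]
  rfl

lemma pd_comm {f : (Fin 3 → ℝ) → ℝ} (hf : ContDiff ℝ (⊤ : ℕ∞) f) (α β : Fin 3) (X : Fin 3 → ℝ) :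
    pd (pd f α) β X = pd (pd f β) α X := by
  rw [pd_eq_snd hf, pd_eq_snd hf]
  exact (hf.contDiffAt.isSymmSndFDerivAt (by simp only [minSmoothness_of_isRCLikeNormedField]; exact WithTop.coe_le_coe.2 le_top)).eq _ _

lemma pd3_symm {f : (Fin 3 → ℝ) → ℝ} (hf : ContDiff ℝ (⊤ : ℕ∞) f) (x y z : Fin 3) (X : Fin 3 → ℝ) :
    pd (pd (pd f x) y) z X = pd (pd (pd f y) x) z X := by
  have h : pd (pd f x) y = pd (pd f y) x := funext (pd_comm hf x y)
  rw [h]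

lemma pd_mul {f g : (Fin 3 → ℝ) → ℝ} (hf : ContDiff ℝ (⊤ : ℕ∞) f) (hg : ContDiff ℝ (⊤ : ℕ∞) g)
    (α : Fin 3) (X : Fin 3 → ℝ) :
    pd (fun Y => f Y * g Y) α X = pd f α X * g X + f X * pd g α X := by
  rw [pd, fderiv_fun_mul (hf.differentiable (by simp) X) (hg.differentiable (by simp) X)]
  simp [pd]; ring

lemma pd_add {f g : (Fin 3 → ℝ) → ℝ} (hf : ContDiff ℝ (⊤ : ℕ∞) f) (hg : ContDiff ℝ (⊤ : ℕ∞) g)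
    (α : Fin 3) (X : Fin 3 → ℝ) :
    pd (fun Y => f Y + g Y) α X = pd f α X + pd g α X := by
  rw [pd, fderiv_fun_add (hf.differentiable (by simp) X) (hg.differentiable (by simp) X)]
  simp [pd]

lemma pd_sum {ι : Type*} (s : Finset ι) {f : ι → (Fin 3 → ℝ) → ℝ}
    (hf : ∀ i, ContDiff ℝ (⊤ : ℕ∞) (f i)) (α : Fin 3) (X : Fin 3 → ℝ) :
    pd (fun Y => ∑ i ∈ s, f i Y) α X = ∑ i ∈ s, pd (f i) α X := by
  rw [pd, fderiv_fun_sum (fun i _ => (hf i).differentiable (by simp) X)]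
  simp [pd]

lemma pd_CG {χ : (Fin 3 → ℝ) → (Fin 3 → ℝ)} (hχ : ContDiff ℝ (⊤ : ℕ∞) χ) (μ ν ρ : Fin 3)
    (X : Fin 3 → ℝ) :
    pd (CG χ μ ν) ρ X
      = ∑ i, (pd (pd (fun Y => χ Y i) μ) ρ X * pd (fun Y => χ Y i) ν X
          + pd (fun Y => χ Y i) μ X * pd (pd (fun Y => χ Y i) ν) ρ X) := by
  rw [show CG χ μ ν = fun X => ∑ i, pd (fun Y => χ Y i) μ X * pd (fun Y => χ Y i) ν X from rfl,
    pd_sum Finset.univ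
    (fun i => (pd_smooth (chi_smooth hχ i) μ).mul (pd_smooth (chi_smooth hχ i) ν))]
  exact Finset.sum_congr rfl fun i _ =>
    pd_mul (pd_smooth (chi_smooth hχ i) μ) (pd_smooth (chi_smooth hχ i) ν) ρ X

lemma pd_pd_CG {χ : (Fin 3 → ℝ) → (Fin 3 → ℝ)} (hχ : ContDiff ℝ (⊤ : ℕ∞) χ) (μ ν ρ σ : Fin 3)
    (X : Fin 3 → ℝ) :
    pd (pd (CG χ μ ν) ρ) σ X
      = ∑ i, (pd (pd (pd (fun Y => χ Y i) μ) ρ) σ X * pd (fun Y => χ Y i) ν X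
          + pd (pd (fun Y => χ Y i) μ) ρ X * pd (pd (fun Y => χ Y i) ν) σ X
          + pd (pd (fun Y => χ Y i) μ) σ X * pd (pd (fun Y => χ Y i) ν) ρ X
          + pd (fun Y => χ Y i) μ X * pd (pd (pd (fun Y => χ Y i) ν) ρ) σ X) := by
  have hrw : pd (CG χ μ ν) ρ = fun Y =>
      ∑ i, (pd (pd (fun Y => χ Y i) μ) ρ Y * pd (fun Y => χ Y i) ν Y
          + pd (fun Y => χ Y i) μ Y * pd (pd (fun Y => χ Y i) ν) ρ Y) :=
    funext (pd_CG hχ μ ν ρ)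
  have hs : ∀ i : Fin 3, ContDiff ℝ (⊤ : ℕ∞) (fun Y =>
      pd (pd (fun Y => χ Y i) μ) ρ Y * pd (fun Y => χ Y i) ν Y
        + pd (fun Y => χ Y i) μ Y * pd (pd (fun Y => χ Y i) ν) ρ Y) := fun i =>
    ((pd_smooth (pd_smooth (chi_smooth hχ i) μ) ρ).mul (pd_smooth (chi_smooth hχ i) ν)).add
      ((pd_smooth (chi_smooth hχ i) μ).mul (pd_smooth (pd_smooth (chi_smooth hχ i) ν) ρ))
  rw [hrw, pd_sum Finset.univ hs]
  refine Finset.sum_congr rfl fun i _ => ?_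
  rw [pd_add ((pd_smooth (pd_smooth (chi_smooth hχ i) μ) ρ).mul
      (pd_smooth (chi_smooth hχ i) ν))
    ((pd_smooth (chi_smooth hχ i) μ).mul (pd_smooth (pd_smooth (chi_smooth hχ i) ν) ρ)),
    pd_mul (pd_smooth (pd_smooth (chi_smooth hχ i) μ) ρ) (pd_smooth (chi_smooth hχ i) ν),
    pd_mul (pd_smooth (chi_smooth hχ i) μ) (pd_smooth (pd_smooth (chi_smooth hχ i) ν) ρ)]
  ring

lemma key_mat (F C : Matrix (Fin 3) (Fin 3) ℝ) (hdet : IsUnit F.det)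
    (hC : C = Fᵀ * F) (u v : Fin 3 → ℝ) :
    ∑ ν, ∑ δ, C⁻¹ ν δ * (∑ i, u i * F i ν) * (∑ j, v j * F j δ) = ∑ i, u i * v i := by
  have hdT : IsUnit Fᵀ.det := by rwa [Matrix.det_transpose]
  have h1 : F * C⁻¹ * Fᵀ = 1 := by
    rw [hC, Matrix.mul_inv_rev]
    calc F * (F⁻¹ * Fᵀ⁻¹) * Fᵀ = (F * F⁻¹) * (Fᵀ⁻¹ * Fᵀ) := by
          simp only [Matrix.mul_assoc]
    _ = 1 := by rw [Matrix.mul_nonsing_inv F hdet, Matrix.nonsing_inv_mul Fᵀ hdT, one_mul]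
  have e0 : ∀ ν, (∑ i, u i * F i ν) = Matrix.vecMul u F ν := by
    intro ν; simp [Matrix.vecMul, dotProduct]
  have e0' : ∀ δ, (∑ j, v j * F j δ) = Matrix.vecMul v F δ := by
    intro δ; simp [Matrix.vecMul, dotProduct]
  calc ∑ ν, ∑ δ, C⁻¹ ν δ * (∑ i, u i * F i ν) * (∑ j, v j * F j δ)
      = Matrix.vecMul u F ⬝ᵥ (C⁻¹ *ᵥ Matrix.vecMul v F) := by
        simp only [e0, e0', dotProduct, Matrix.mulVec, Finset.mul_sum]
        exact Finset.sum_congr rfl fun ν _ => Finset.sum_congr rfl fun δ _ => by ring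
    _ = u ⬝ᵥ (F *ᵥ (C⁻¹ *ᵥ (Fᵀ *ᵥ v))) := by
        rw [← Matrix.dotProduct_mulVec, ← Matrix.mulVec_transpose]
    _ = ∑ i, u i * v i := by
        rw [Matrix.mulVec_mulVec, Matrix.mulVec_mulVec, h1, Matrix.one_mulVec]
        simp [dotProduct]

end Aux

/-- Piola's formula expressing the contracted third derivatives of the placement purely
in terms of C, its first and second derivatives and the inverse matrix C⁻¹. -/
theorem piola_third_gradient_via_C
    (χ : (Fin 3 → ℝ) → (Fin 3 → ℝ)) (hχ : ContDiff ℝ (⊤ : ℕ∞) χ)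
    (hF : ∀ X, IsUnit (Fgrad χ X))
    (X : Fin 3 → ℝ) (α β γ η : Fin 3) :
    ∑ i, pd (fun Y => χ Y i) γ X * pd (pd (pd (fun Y => χ Y i) α) β) η X
      = - (1 / 4) * (∑ ν, ∑ δ, (CGmat χ X)⁻¹ ν δ *
            (pd (CG χ γ ν) η X + pd (CG χ η ν) γ X - pd (CG χ η γ) ν X) *
            (pd (CG χ α δ) β X + pd (CG χ β δ) α X - pd (CG χ β α) δ X))
        + (1 / 2) * (pd (pd (CG χ α γ) η) β X + pd (pd (CG χ β γ) η) α X
            - pd (pd (CG χ β α) η) γ X) := by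
  have hχi : ∀ i : Fin 3, ContDiff ℝ (⊤ : ℕ∞) (fun Y => χ Y i) := chi_smooth hχ
  -- first factor
  have hfirst : ∀ ν, pd (CG χ γ ν) η X + pd (CG χ η ν) γ X - pd (CG χ η γ) ν X
      = 2 * ∑ i, pd (pd (fun Y => χ Y i) γ) η X * pd (fun Y => χ Y i) ν X := by
    intro ν
    rw [pd_CG hχ γ ν η, pd_CG hχ η ν γ, pd_CG hχ η γ ν, ← Finset.sum_add_distrib,
      ← Finset.sum_sub_distrib, Finset.mul_sum]
    refine Finset.sum_congr rfl fun i _ => ?_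
    have hf := hχi i
    rw [pd_comm hf η γ X, pd_comm hf η ν X, pd_comm hf γ ν X]
    ring
  have hsecond : ∀ δ, pd (CG χ α δ) β X + pd (CG χ β δ) α X - pd (CG χ β α) δ X
      = 2 * ∑ i, pd (pd (fun Y => χ Y i) α) β X * pd (fun Y => χ Y i) δ X := by
    intro δ
    rw [pd_CG hχ α δ β, pd_CG hχ β δ α, pd_CG hχ β α δ, ← Finset.sum_add_distrib,
      ← Finset.sum_sub_distrib, Finset.mul_sum]
    refine Finset.sum_congr rfl fun i _ => ?_
    have hf := hχi i
    rw [pd_comm hf β α X, pd_comm hf β δ X, pd_comm hf α δ X]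
    ring
  -- the quadratic term via the matrix identity
  have hdet : IsUnit (Fgrad χ X).det := (Matrix.isUnit_iff_isUnit_det _).1 (hF X)
  have hC : CGmat χ X = (Fgrad χ X).transpose * Fgrad χ X := by
    ext a b
    simp [CGmat, CG, Fgrad, Matrix.mul_apply]
  have hk := key_mat (Fgrad χ X) (CGmat χ X) hdet hC
    (fun i => pd (pd (fun Y => χ Y i) γ) η X)
    (fun i => pd (pd (fun Y => χ Y i) α) β X)
  simp only [Fgrad, Matrix.of_apply] at hk
  have hmain : (∑ ν, ∑ δ, (CGmat χ X)⁻¹ ν δ *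
        (pd (CG χ γ ν) η X + pd (CG χ η ν) γ X - pd (CG χ η γ) ν X) *
        (pd (CG χ α δ) β X + pd (CG χ β δ) α X - pd (CG χ β α) δ X))
      = 4 * ∑ i, pd (pd (fun Y => χ Y i) γ) η X * pd (pd (fun Y => χ Y i) α) β X := by
    calc (∑ ν, ∑ δ, (CGmat χ X)⁻¹ ν δ *
          (pd (CG χ γ ν) η X + pd (CG χ η ν) γ X - pd (CG χ η γ) ν X) *
          (pd (CG χ α δ) β X + pd (CG χ β δ) α X - pd (CG χ β α) δ X))
        = ∑ ν, ∑ δ, 4 * ((CGmat χ X)⁻¹ ν δ *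
            (∑ i, pd (pd (fun Y => χ Y i) γ) η X * pd (fun Y => χ Y i) ν X) *
            (∑ j, pd (pd (fun Y => χ Y j) α) β X * pd (fun Y => χ Y j) δ X)) := by
          refine Finset.sum_congr rfl fun ν _ => Finset.sum_congr rfl fun δ _ => ?_
          rw [hfirst ν, hsecond δ]; ring
      _ = 4 * ∑ ν, ∑ δ, ((CGmat χ X)⁻¹ ν δ *
            (∑ i, pd (pd (fun Y => χ Y i) γ) η X * pd (fun Y => χ Y i) ν X) *
            (∑ j, pd (pd (fun Y => χ Y j) α) β X * pd (fun Y => χ Y j) δ X)) := by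
          simp only [← Finset.mul_sum]
      _ = 4 * ∑ i, pd (pd (fun Y => χ Y i) γ) η X * pd (pd (fun Y => χ Y i) α) β X := by
          rw [hk]
  -- the second-derivative term
  have hB : pd (pd (CG χ α γ) η) β X + pd (pd (CG χ β γ) η) α X
        - pd (pd (CG χ β α) η) γ X
      = 2 * ∑ i, (pd (fun Y => χ Y i) γ X * pd (pd (pd (fun Y => χ Y i) α) β) η X
          + pd (pd (fun Y => χ Y i) γ) η X * pd (pd (fun Y => χ Y i) α) β X) := by
    rw [pd_pd_CG hχ α γ η β X, pd_pd_CG hχ β γ η α X, pd_pd_CG hχ β α η γ X,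
      ← Finset.sum_add_distrib, ← Finset.sum_sub_distrib, Finset.mul_sum]
    refine Finset.sum_congr rfl fun i _ => ?_
    have hf := hχi i
    have r1 : pd (pd (pd (fun Y => χ Y i) α) η) β X
        = pd (pd (pd (fun Y => χ Y i) α) β) η X := pd_comm (pd_smooth hf α) η β X
    have r2 : pd (pd (pd (fun Y => χ Y i) β) η) α X
        = pd (pd (pd (fun Y => χ Y i) α) β) η X :=
      (pd_comm (pd_smooth hf β) η α X).trans (pd3_symm hf β α η X)
    have r4 : pd (pd (pd (fun Y => χ Y i) β) η) γ X
        = pd (pd (pd (fun Y => χ Y i) γ) η) β X :=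
      ((pd_comm (pd_smooth hf β) η γ X).trans (pd3_symm hf β γ η X)).trans
        (pd_comm (pd_smooth hf γ) β η X)
    have r5 : pd (pd (pd (fun Y => χ Y i) α) η) γ X
        = pd (pd (pd (fun Y => χ Y i) γ) η) α X :=
      ((pd_comm (pd_smooth hf α) η γ X).trans (pd3_symm hf α γ η X)).trans
        (pd_comm (pd_smooth hf γ) α η X)
    have r6 : pd (pd (fun Y => χ Y i) β) γ X = pd (pd (fun Y => χ Y i) γ) β X :=
      pd_comm hf β γ X
    have r7 : pd (pd (fun Y => χ Y i) α) γ X = pd (pd (fun Y => χ Y i) γ) α X :=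
      pd_comm hf α γ X
    have r8 : pd (pd (fun Y => χ Y i) β) α X = pd (pd (fun Y => χ Y i) α) β X :=
      pd_comm hf β α X
    rw [r1, r2, r4, r5, r6, r7, r8]
    ring
  rw [hmain, hB, Finset.sum_add_distrib]
  ring
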